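/- Let N ~ N(m, σ²) with |m| ≤ L, α ∈ [0,1], Y a real random variable with Lebesgue density h, ε Bernoulli(α), all independent. Fix 0 < ε₀ < 1 and set β = L + σ^{1-ε₀}, B = [-β, β]. Define the Markov kernel K by K(x, ·) = δ_x if x ∈ B and K(x, ·) = N(0, σ²) if x ∉ B. Then, with Q the law of N + εY, ‖KQ - law(N)‖_TV ≤ 8Φ(-σ^{-ε₀}) + α|m|/(√2 σ) + 2α ∫_{-2β}^{2β} h(y) dy. -/

import Mathlib

open MeasureTheory ProbabilityTheory

/-- Total variation distance `‖P - Q‖_TV = sup_A |P(A) - Q(A)|`. -/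
noncomputable def tvDist {α : Type*} [MeasurableSpace α] (P Q : Measure α) : ℝ :=
  ⨆ A : {A : Set α // MeasurableSet A}, |(P A.1).toReal - (Q A.1).toReal|

/-- Standard normal cumulative distribution function. -/
noncomputable def stdNormalCDF (t : ℝ) : ℝ :=
  ∫ u in Set.Iic t, (Real.sqrt (2 * Real.pi))⁻¹ * Real.exp (-u ^ 2 / 2)

/-!
Write `P = N(m,σ²)`, `G = N(0,σ²)` and `C = P ∗ law(Y)`. Since `K` acts linearly,
`KQ - P = (1-α)(KP - P) + α(KC - G) + α(G - P)`, and on every set: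
* `|KP - P| ≤ P(Bᶜ) ≤ 2Φ(-σ^{-ε₀})`, the Gaussian tail bound, because `β - |m| ≥ σ · σ^{-ε₀}`;
* `|KC - G| ≤ C(B) ≤ P(|Y| ≤ 2β) + P(Bᶜ)`, because `N + Y ∈ B` forces `|Y| ≤ 2β` or `N ∉ B`;
* `|G - P| ≤ |m| / (√(2π) σ)` by Scheffé's argument: the two densities cross at `m/2`, so the
  difference is largest on `[m/2, ∞)`, where it is a difference of two values of `Φ`.
-/

theorem tvDist_le {α : Type*} [MeasurableSpace α] {P Q : Measure α} {r : ℝ}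
    (h : ∀ A, MeasurableSet A → |P.real A - Q.real A| ≤ r) : tvDist P Q ≤ r :=
  Real.iSup_le (fun A => h A.1 A.2) (by simpa using h ∅ MeasurableSet.empty)

namespace MeasureTheory

variable {α : Type*} [MeasurableSpace α]

theorem measureReal_mixture (μ ν : Measure α)
    [IsFiniteMeasure μ] [IsFiniteMeasure ν] {a : ℝ} (ha₀ : 0 ≤ a) (ha₁ : a ≤ 1) (s : Set α) :
    (ENNReal.ofReal (1 - a) • μ + ENNReal.ofReal a • ν).real s
      = (1 - a) * μ.real s + a * ν.real s := by
  rw [measureReal_add_apply (ENNReal.mul_ne_top ENNReal.ofReal_ne_top (measure_ne_top μ s))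
      (ENNReal.mul_ne_top ENNReal.ofReal_ne_top (measure_ne_top ν s)),
    measureReal_ennreal_smul_apply, measureReal_ennreal_smul_apply,
    ENNReal.toReal_ofReal (sub_nonneg.2 ha₁), ENNReal.toReal_ofReal ha₀]

theorem setIntegral_le_setIntegral_of_nonneg_of_nonpos {μ : Measure α} {F : α → ℝ}
    {A S : Set α} (hF : Integrable F μ) (hA : MeasurableSet A) (hS : MeasurableSet S)
    (hpos : ∀ x ∈ S, 0 ≤ F x) (hneg : ∀ x ∉ S, F x ≤ 0) :
    ∫ x in A, F x ∂μ ≤ ∫ x in S, F x ∂μ :=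
  calc ∫ x in A, F x ∂μ = ∫ x in A ∩ S, F x ∂μ + ∫ x in A \ S, F x ∂μ :=
        (integral_inter_add_sdiff hS hF.integrableOn).symm
    _ ≤ ∫ x in A ∩ S, F x ∂μ :=
        add_le_of_nonpos_right (setIntegral_nonpos (hA.diff hS) fun x hx => hneg x hx.2)
    _ ≤ ∫ x in S, F x ∂μ :=
        setIntegral_mono_set hF.integrableOn (ae_restrict_of_forall_mem hS hpos)
          (Filter.Eventually.of_forall Set.inter_subset_right)

theorem measureReal_withDensity_ofReal {μ : Measure α} {h : α → ℝ} (hh : Measurable h)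
    (h0 : ∀ y, 0 ≤ h y) {s : Set α} (hs : MeasurableSet s) :
    (μ.withDensity fun y => ENNReal.ofReal (h y)).real s = ∫ y in s, h y ∂μ := by
  rw [measureReal_def, withDensity_apply _ hs,
    integral_eq_lintegral_of_nonneg_ae (ae_of_all _ h0) hh.aestronglyMeasurable]

theorem measureReal_withDensity_ofReal_Icc {h : ℝ → ℝ} (hh : Measurable h) (h0 : ∀ y, 0 ≤ h y)
    {a b : ℝ} (hab : a ≤ b) :
    (volume.withDensity fun y => ENNReal.ofReal (h y)).real (Set.Icc a b)
      = ∫ y in a..b, h y := by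
  rw [measureReal_withDensity_ofReal hh h0 measurableSet_Icc, integral_Icc_eq_integral_Ioc,
    intervalIntegral.integral_of_le hab]

theorem conv_real_Icc_le {P ν : Measure ℝ} [IsProbabilityMeasure P] [IsProbabilityMeasure ν]
    (β : ℝ) :
    (P.conv ν).real (Set.Icc (-β) β)
      ≤ ν.real (Set.Icc (-(2 * β)) (2 * β)) + P.real (Set.Icc (-β) β)ᶜ := by
  have hsub : (fun p : ℝ × ℝ => p.1 + p.2) ⁻¹' Set.Icc (-β) β
      ⊆ Set.univ ×ˢ Set.Icc (-(2 * β)) (2 * β) ∪ (Set.Icc (-β) β)ᶜ ×ˢ Set.univ := by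
    rintro ⟨x, y⟩ ⟨hxy₁, hxy₂⟩
    by_cases hx : x ∈ Set.Icc (-β) β
    · exact Or.inl ⟨Set.mem_univ x, by constructor <;> linarith [hx.1, hx.2]⟩
    · exact Or.inr ⟨hx, Set.mem_univ y⟩
  rw [Measure.conv, map_measureReal_apply measurable_add measurableSet_Icc]
  calc (P.prod ν).real ((fun p : ℝ × ℝ => p.1 + p.2) ⁻¹' Set.Icc (-β) β)
      ≤ (P.prod ν).real (Set.univ ×ˢ Set.Icc (-(2 * β)) (2 * β))
          + (P.prod ν).real ((Set.Icc (-β) β)ᶜ ×ˢ Set.univ) :=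
        (measureReal_mono hsub).trans (measureReal_union_le _ _)
    _ = ν.real (Set.Icc (-(2 * β)) (2 * β)) + P.real (Set.Icc (-β) β)ᶜ := by
        simp only [measureReal_prod_prod, probReal_univ, one_mul, mul_one]

end MeasureTheory

namespace MeasureTheory.Measure

variable {α : Type*} [MeasurableSpace α] {B A : Set α} {G Q : Measure α}

/-- `Q` pushed through the kernel that keeps a point of `B` and resamples a point outside `B`
from `G`. -/
noncomputable def resampleOff (Q : Measure α) (B : Set α) (G : Measure α) : Measure α :=
  Q.restrict B + Q Bᶜ • G

theorem resampleOff_add (Q₁ Q₂ : Measure α) (B : Set α) (G : Measure α) :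
    (Q₁ + Q₂).resampleOff B G = Q₁.resampleOff B G + Q₂.resampleOff B G := by
  simp only [resampleOff, restrict_add, add_apply, add_smul]
  abel

theorem resampleOff_smul (c : ENNReal) (Q : Measure α) (B : Set α) (G : Measure α) :
    (c • Q).resampleOff B G = c • Q.resampleOff B G := by
  simp only [resampleOff, restrict_smul, smul_apply, smul_eq_mul, mul_smul, smul_add]

instance [IsFiniteMeasure G] [IsFiniteMeasure Q] : IsFiniteMeasure (Q.resampleOff B G) :=
  ⟨ENNReal.add_lt_top.2 ⟨measure_lt_top _ _,
    ENNReal.mul_lt_top (measure_lt_top _ _) (measure_lt_top _ _)⟩⟩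

theorem resampleOff_real_apply [IsFiniteMeasure G] [IsFiniteMeasure Q] (hA : MeasurableSet A) :
    (Q.resampleOff B G).real A = Q.real (A ∩ B) + Q.real Bᶜ * G.real A := by
  rw [resampleOff, measureReal_add_apply (h₂ := ENNReal.mul_ne_top (measure_ne_top Q Bᶜ)
      (measure_ne_top G A)), measureReal_restrict_apply hA, measureReal_ennreal_smul_apply]
  rfl

variable [IsProbabilityMeasure G] [IsProbabilityMeasure Q]

theorem abs_resampleOff_real_sub_self_le (hA : MeasurableSet A) (hB : MeasurableSet B) :
    |(Q.resampleOff B G).real A - Q.real A| ≤ Q.real Bᶜ := by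
  have hdiff : (Q.resampleOff B G).real A - Q.real A
      = Q.real Bᶜ * G.real A - Q.real (A ∩ Bᶜ) := by
    rw [resampleOff_real_apply hA, ← measureReal_inter_add_sdiff hB (μ := Q) (s := A),
      Set.sdiff_eq]
    ring
  rw [hdiff]
  exact abs_sub_le_of_nonneg_of_le (by positivity)
    (mul_le_of_le_one_right measureReal_nonneg measureReal_le_one) measureReal_nonneg
    (measureReal_mono Set.inter_subset_right)

theorem abs_resampleOff_real_sub_le (hA : MeasurableSet A) (hB : MeasurableSet B) :
    |(Q.resampleOff B G).real A - G.real A| ≤ Q.real B := by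
  have hdiff : (Q.resampleOff B G).real A - G.real A = Q.real (A ∩ B) - Q.real B * G.real A := by
    rw [resampleOff_real_apply hA, probReal_compl_eq_one_sub hB]
    ring
  rw [hdiff]
  exact abs_sub_le_of_nonneg_of_le measureReal_nonneg (measureReal_mono Set.inter_subset_right)
    (by positivity) (mul_le_of_le_one_right measureReal_nonneg measureReal_le_one)

theorem abs_resampleOff_mixture_real_sub_le {P C : Measure α} [IsProbabilityMeasure P]
    [IsProbabilityMeasure C] {a : ℝ} (ha₀ : 0 ≤ a) (ha₁ : a ≤ 1) (hA : MeasurableSet A)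
    (hB : MeasurableSet B) :
    |((ENNReal.ofReal (1 - a) • P + ENNReal.ofReal a • C).resampleOff B G).real A - P.real A|
      ≤ (1 - a) * P.real Bᶜ + a * (C.real B + |G.real A - P.real A|) := by
  rw [resampleOff_add, resampleOff_smul, resampleOff_smul, measureReal_mixture _ _ ha₀ ha₁]
  calc |(1 - a) * (P.resampleOff B G).real A + a * (C.resampleOff B G).real A - P.real A|
      = |(1 - a) * ((P.resampleOff B G).real A - P.real A)
          + a * (((C.resampleOff B G).real A - G.real A) + (G.real A - P.real A))| := by
        ring_nf
    _ ≤ (1 - a) * |(P.resampleOff B G).real A - P.real A|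
          + a * |((C.resampleOff B G).real A - G.real A) + (G.real A - P.real A)| := by
        refine (abs_add_le _ _).trans_eq ?_
        rw [abs_mul, abs_mul, abs_of_nonneg (sub_nonneg.2 ha₁), abs_of_nonneg ha₀]
    _ ≤ (1 - a) * P.real Bᶜ + a * (C.real B + |G.real A - P.real A|) := by
        have := sub_nonneg.2 ha₁
        gcongr
        · exact abs_resampleOff_real_sub_self_le hA hB
        · exact (abs_add_le _ _).trans (add_le_add_left (abs_resampleOff_real_sub_le hA hB) _)

end MeasureTheory.Measure

namespace ProbabilityTheory

open Set

theorem gaussianReal_real_apply (μ : ℝ) {v : NNReal} (hv : v ≠ 0) (s : Set ℝ) :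
    (gaussianReal μ v).real s = ∫ x in s, gaussianPDFReal μ v x := by
  rw [measureReal_def, gaussianReal_apply_eq_integral μ hv,
    ENNReal.toReal_ofReal (integral_nonneg fun x => gaussianPDFReal_nonneg μ v x)]

theorem gaussianPDFReal_zero_one_le (x : ℝ) :
    gaussianPDFReal 0 1 x ≤ (Real.sqrt (2 * Real.pi))⁻¹ := by
  rw [gaussianPDFReal, NNReal.coe_one, mul_one]
  refine mul_le_of_le_one_right (by positivity) (Real.exp_le_one_iff.2 ?_)
  have := sq_nonneg (x - 0)
  linarith

theorem stdNormalCDF_eq (t : ℝ) : stdNormalCDF t = (gaussianReal 0 1).real (Iic t) := by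
  rw [gaussianReal_real_apply 0 one_ne_zero, stdNormalCDF]
  simp [gaussianPDFReal]

theorem stdNormalCDF_nonneg (t : ℝ) : 0 ≤ stdNormalCDF t :=
  (stdNormalCDF_eq t).symm ▸ measureReal_nonneg

theorem stdNormalCDF_mono : Monotone stdNormalCDF := fun t u htu => by
  simp only [stdNormalCDF_eq]
  exact measureReal_mono (Iic_subset_Iic.2 htu)

theorem stdNormalCDF_sub_le {t u : ℝ} (htu : t ≤ u) :
    stdNormalCDF u - stdNormalCDF t ≤ (u - t) / Real.sqrt (2 * Real.pi) := by
  have hIoc : stdNormalCDF u - stdNormalCDF t = (gaussianReal 0 1).real (Ioc t u) := by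
    rw [stdNormalCDF_eq, stdNormalCDF_eq, ← Iic_sdiff_Iic,
      measureReal_sdiff (Iic_subset_Iic.2 htu) measurableSet_Iic]
  rw [hIoc, gaussianReal_real_apply 0 one_ne_zero]
  calc ∫ x in Ioc t u, gaussianPDFReal 0 1 x
      ≤ ‖∫ x in Ioc t u, gaussianPDFReal 0 1 x‖ := Real.le_norm_self _
    _ ≤ (Real.sqrt (2 * Real.pi))⁻¹ * volume.real (Ioc t u) :=
        norm_setIntegral_le_of_norm_le_const measure_Ioc_lt_top fun x _ => by
          rw [Real.norm_of_nonneg (gaussianPDFReal_nonneg 0 1 x)]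
          exact gaussianPDFReal_zero_one_le x
    _ = (u - t) / Real.sqrt (2 * Real.pi) := by
        rw [Real.volume_real_Ioc_of_le htu]
        ring

theorem gaussianPDFReal_le_gaussianPDFReal {μ μ' x : ℝ} (v : NNReal)
    (h : (x - μ) ^ 2 ≤ (x - μ') ^ 2) : gaussianPDFReal μ' v x ≤ gaussianPDFReal μ v x := by
  unfold gaussianPDFReal
  gcongr

theorem gaussianReal_neg_real_neg (μ : ℝ) (v : NNReal) {A : Set ℝ} (hA : MeasurableSet A) :
    (gaussianReal (-μ) v).real (-A) = (gaussianReal μ v).real A := by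
  rw [← gaussianReal_map_neg, map_measureReal_apply measurable_neg hA.neg, neg_preimage, neg_neg]

-- The anonymous constructor elaborates at type `{r // 0 ≤ r}`, where instance search does not
-- see the `ℝ≥0` instance.
instance isProbabilityMeasure_gaussianReal_sq (m σ : ℝ) :
    IsProbabilityMeasure (gaussianReal m ⟨σ ^ 2, sq_nonneg σ⟩) :=
  instIsProbabilityMeasureGaussianReal m _

theorem gaussianReal_eq_map_std (m σ : ℝ) :
    gaussianReal m ⟨σ ^ 2, sq_nonneg σ⟩ = (gaussianReal 0 1).map (fun x => σ * x + m) := by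
  have hcomp : (fun x => σ * x + m) = (· + m) ∘ (σ * ·) := rfl
  rw [hcomp, ← Measure.map_map (measurable_add_const m) (measurable_const_mul σ),
    gaussianReal_map_const_mul, gaussianReal_map_add_const]
  congr 1
  · ring
  · exact (mul_one _).symm

variable {m σ : ℝ}

theorem gaussianReal_real_Iic (hσ : 0 < σ) (t : ℝ) :
    (gaussianReal m ⟨σ ^ 2, sq_nonneg σ⟩).real (Iic t) = stdNormalCDF ((t - m) / σ) := by
  have hpre : (fun x => σ * x + m) ⁻¹' Iic t = Iic ((t - m) / σ) := by
    ext x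
    simp only [mem_preimage, mem_Iic, le_div_iff₀ hσ]
    constructor <;> intro <;> linarith
  rw [gaussianReal_eq_map_std, map_measureReal_apply (by fun_prop) measurableSet_Iic, hpre,
    stdNormalCDF_eq]

theorem gaussianReal_real_Ici (hσ : 0 < σ) (t : ℝ) :
    (gaussianReal m ⟨σ ^ 2, sq_nonneg σ⟩).real (Ici t) = stdNormalCDF ((m - t) / σ) := by
  have hneg := gaussianReal_map_neg (μ := -m) (v := ⟨σ ^ 2, sq_nonneg σ⟩)
  rw [neg_neg] at hneg
  rw [← hneg, map_measureReal_apply measurable_neg measurableSet_Ici, neg_preimage, neg_Ici,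
    gaussianReal_real_Iic hσ]
  ring_nf

theorem gaussianReal_real_sub_le_of_nonneg (hσ : 0 < σ) (hm : 0 ≤ m) {A : Set ℝ}
    (hA : MeasurableSet A) :
    (gaussianReal m ⟨σ ^ 2, sq_nonneg σ⟩).real A - (gaussianReal 0 ⟨σ ^ 2, sq_nonneg σ⟩).real A
      ≤ m / (σ * Real.sqrt (2 * Real.pi)) := by
  set v : NNReal := ⟨σ ^ 2, sq_nonneg σ⟩
  have hv : v ≠ 0 := fun hv => (pow_pos hσ 2).ne' (congrArg NNReal.toReal hv)
  have hdiff : ∀ s, (gaussianReal m v).real s - (gaussianReal 0 v).real s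
      = ∫ x in s, (gaussianPDFReal m v x - gaussianPDFReal 0 v x) := fun s => by
    rw [gaussianReal_real_apply m hv, gaussianReal_real_apply 0 hv,
      integral_sub (integrable_gaussianPDFReal m v).integrableOn
        (integrable_gaussianPDFReal 0 v).integrableOn]
  have hScheffe := setIntegral_le_setIntegral_of_nonneg_of_nonpos (A := A) (S := Ici (m / 2))
    ((integrable_gaussianPDFReal m v).sub (integrable_gaussianPDFReal 0 v)) hA measurableSet_Ici
    (fun x hx => sub_nonneg.2 <| gaussianPDFReal_le_gaussianPDFReal v <| by
      rw [mem_Ici] at hx; nlinarith)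
    (fun x hx => sub_nonpos.2 <| gaussianPDFReal_le_gaussianPDFReal v <| by
      rw [mem_Ici, not_le] at hx; nlinarith)
  calc (gaussianReal m v).real A - (gaussianReal 0 v).real A
      ≤ (gaussianReal m v).real (Ici (m / 2)) - (gaussianReal 0 v).real (Ici (m / 2)) := by
        rw [hdiff, hdiff]; exact hScheffe
    _ = stdNormalCDF ((m - m / 2) / σ) - stdNormalCDF ((0 - m / 2) / σ) := by
        rw [gaussianReal_real_Ici hσ, gaussianReal_real_Ici hσ]
    _ ≤ ((m - m / 2) / σ - (0 - m / 2) / σ) / Real.sqrt (2 * Real.pi) :=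
        stdNormalCDF_sub_le (by gcongr)
    _ = m / (σ * Real.sqrt (2 * Real.pi)) := by
        field_simp
        ring

theorem gaussianReal_real_sub_le (hσ : 0 < σ) {A : Set ℝ} (hA : MeasurableSet A) :
    (gaussianReal m ⟨σ ^ 2, sq_nonneg σ⟩).real A - (gaussianReal 0 ⟨σ ^ 2, sq_nonneg σ⟩).real A
      ≤ |m| / (σ * Real.sqrt (2 * Real.pi)) := by
  rcases le_total 0 m with hm | hm
  · rw [abs_of_nonneg hm]
    exact gaussianReal_real_sub_le_of_nonneg hσ hm hA
  · have hreflect := gaussianReal_real_sub_le_of_nonneg hσ (neg_nonneg.2 hm) hA.neg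
    have hcentered := gaussianReal_neg_real_neg 0 ⟨σ ^ 2, sq_nonneg σ⟩ hA
    rw [neg_zero] at hcentered
    rwa [gaussianReal_neg_real_neg m ⟨σ ^ 2, sq_nonneg σ⟩ hA, hcentered,
      ← abs_of_nonpos hm] at hreflect

theorem abs_gaussianReal_real_sub_le (hσ : 0 < σ) {A : Set ℝ} (hA : MeasurableSet A) :
    |(gaussianReal m ⟨σ ^ 2, sq_nonneg σ⟩).real A - (gaussianReal 0 ⟨σ ^ 2, sq_nonneg σ⟩).real A|
      ≤ |m| / (σ * Real.sqrt (2 * Real.pi)) := by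
  have hcompl := gaussianReal_real_sub_le (m := m) hσ hA.compl
  rw [probReal_compl_eq_one_sub hA, probReal_compl_eq_one_sub hA] at hcompl
  exact abs_sub_le_iff.2 ⟨gaussianReal_real_sub_le hσ hA, by linarith⟩

theorem gaussianReal_real_compl_Icc_le {L : ℝ} (hσ : 0 < σ) (hm : |m| ≤ L) (t : ℝ) :
    (gaussianReal m ⟨σ ^ 2, sq_nonneg σ⟩).real (Icc (-(L + σ * t)) (L + σ * t))ᶜ
      ≤ 2 * stdNormalCDF (-t) := by
  set b := L + σ * t
  have hsub : (Icc (-b) b)ᶜ ⊆ Iic (-b) ∪ Ici b := by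
    intro x hx
    rcases le_total x (-b) with hxb | hxb
    · exact Or.inl hxb
    · exact Or.inr (not_lt.1 fun hbx => hx ⟨hxb, hbx.le⟩)
  obtain ⟨hmL, hmU⟩ := abs_le.1 hm
  calc (gaussianReal m ⟨σ ^ 2, sq_nonneg σ⟩).real (Icc (-b) b)ᶜ
      ≤ (gaussianReal m ⟨σ ^ 2, sq_nonneg σ⟩).real (Iic (-b))
          + (gaussianReal m ⟨σ ^ 2, sq_nonneg σ⟩).real (Ici b) :=
        (measureReal_mono hsub).trans (measureReal_union_le _ _)
    _ = stdNormalCDF ((-b - m) / σ) + stdNormalCDF ((m - b) / σ) := by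
        rw [gaussianReal_real_Iic hσ, gaussianReal_real_Ici hσ]
    _ ≤ stdNormalCDF (-t) + stdNormalCDF (-t) := by
        gcongr <;> apply stdNormalCDF_mono <;> rw [div_le_iff₀ hσ] <;> linarith
    _ = 2 * stdNormalCDF (-t) := (two_mul _).symm

end ProbabilityTheory

theorem tvDist_truncation_kernel_general (m σ L a ε₀ : ℝ) (hσ : 0 < σ) (hm : |m| ≤ L)
    (ha : a ∈ Set.Icc (0 : ℝ) 1)
    (h : ℝ → ℝ) (hmeas : Measurable h) (h0 : ∀ y, 0 ≤ h y)
    [IsProbabilityMeasure (volume.withDensity fun y => ENNReal.ofReal (h y))] :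
    let β : ℝ := L + σ ^ (1 - ε₀)
    let B : Set ℝ := Set.Icc (-β) β
    let Q : Measure ℝ :=
      ENNReal.ofReal (1 - a) • gaussianReal m ⟨σ ^ 2, sq_nonneg σ⟩ +
        ENNReal.ofReal a •
          ((gaussianReal m ⟨σ ^ 2, sq_nonneg σ⟩).conv
            (volume.withDensity fun y => ENNReal.ofReal (h y)))
    tvDist (Q.restrict B + Q Bᶜ • gaussianReal 0 ⟨σ ^ 2, sq_nonneg σ⟩)
        (gaussianReal m ⟨σ ^ 2, sq_nonneg σ⟩) ≤
      8 * stdNormalCDF (-(σ ^ (-ε₀))) + a * |m| / (Real.sqrt 2 * σ) +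
        2 * a * ∫ y in (-(2 * β))..(2 * β), h y := by
  intro β B Q
  set P := gaussianReal m ⟨σ ^ 2, sq_nonneg σ⟩
  set φ := stdNormalCDF (-(σ ^ (-ε₀)))
  set η := ∫ y in (-(2 * β))..(2 * β), h y
  obtain ⟨ha₀, ha₁⟩ := ha
  have hβ : β = L + σ * σ ^ (-ε₀) := by
    show L + σ ^ (1 - ε₀) = _
    rw [sub_eq_add_neg, Real.rpow_add hσ, Real.rpow_one]
  have hβ₀ : 0 ≤ β := by
    have := Real.rpow_pos_of_pos hσ (1 - ε₀)
    linarith [(abs_nonneg m).trans hm]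
  have htail : P.real Bᶜ ≤ 2 * φ := by
    have := gaussianReal_real_compl_Icc_le hσ hm (σ ^ (-ε₀))
    rwa [← hβ] at this
  have hconv : (P.conv (volume.withDensity fun y => ENNReal.ofReal (h y))).real B ≤ η + 2 * φ := by
    have := conv_real_Icc_le (P := P) (ν := volume.withDensity fun y => ENNReal.ofReal (h y)) β
    rw [measureReal_withDensity_ofReal_Icc hmeas h0 (by linarith)] at this
    linarith
  have hφ₀ : 0 ≤ φ := stdNormalCDF_nonneg _
  have hη₀ : 0 ≤ η := intervalIntegral.integral_nonneg (by linarith) fun y _ => h0 y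
  refine tvDist_le fun A hA => ?_
  have hshift : |(gaussianReal 0 ⟨σ ^ 2, sq_nonneg σ⟩).real A - P.real A|
      ≤ |m| / (Real.sqrt 2 * σ) := by
    rw [abs_sub_comm, mul_comm (Real.sqrt 2)]
    refine (abs_gaussianReal_real_sub_le hσ hA).trans ?_
    gcongr
    nlinarith [Real.pi_gt_three]
  refine (Measure.abs_resampleOff_mixture_real_sub_le ha₀ ha₁ hA measurableSet_Icc).trans ?_
  rw [mul_div_assoc]
  nlinarith [mul_le_mul_of_nonneg_left htail (sub_nonneg.2 ha₁),
    mul_le_mul_of_nonneg_left (add_le_add hconv hshift) ha₀, mul_nonneg ha₀ hη₀]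

/-- Let `N ~ N(m, σ²)` with `|m| ≤ L`, `α ∈ [0,1]`, `Y` with Lebesgue density `h`, `ε`
Bernoulli(`α`), all independent, so that the law of `N + εY` is
`Q = (1-α)•N(m,σ²) + α•(N(m,σ²) ∗ Y)`.  Fix `0 < ε₀ < 1`, `β = L + σ^{1-ε₀}`,
`B = [-β, β]` and the kernel `K(x,·) = δ_x` on `B`, `K(x,·) = N(0,σ²)` off `B`, so that
`KQ = Q|_B + Q(Bᶜ)•N(0,σ²)`.  Then
`‖KQ - N(m,σ²)‖_TV ≤ 8Φ(-σ^{-ε₀}) + α|m|/(√2 σ) + 2α ∫_{-2β}^{2β} h(y) dy`. -/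
theorem tvDist_truncation_kernel (m σ L a ε₀ : ℝ) (hσ : 0 < σ) (hm : |m| ≤ L)
    (ha : a ∈ Set.Icc (0 : ℝ) 1) (hε₀ : 0 < ε₀) (hε₀1 : ε₀ < 1)
    (h : ℝ → ℝ) (hmeas : Measurable h) (h0 : ∀ y, 0 ≤ h y)
    [IsProbabilityMeasure (volume.withDensity fun y => ENNReal.ofReal (h y))] :
    let β : ℝ := L + σ ^ (1 - ε₀)
    let B : Set ℝ := Set.Icc (-β) β
    let Q : Measure ℝ :=
      ENNReal.ofReal (1 - a) • gaussianReal m ⟨σ ^ 2, sq_nonneg σ⟩ +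
        ENNReal.ofReal a •
          ((gaussianReal m ⟨σ ^ 2, sq_nonneg σ⟩).conv
            (volume.withDensity fun y => ENNReal.ofReal (h y)))
    tvDist (Q.restrict B + Q Bᶜ • gaussianReal 0 ⟨σ ^ 2, sq_nonneg σ⟩)
        (gaussianReal m ⟨σ ^ 2, sq_nonneg σ⟩) ≤
      8 * stdNormalCDF (-(σ ^ (-ε₀))) + a * |m| / (Real.sqrt 2 * σ) +
        2 * a * ∫ y in (-(2 * β))..(2 * β), h y :=
  tvDist_truncation_kernel_general m σ L a ε₀ hσ hm ha h hmeas h0
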